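/- arXiv:1504.05868 — 2 statements merged into one kernel-verified Lean document; each statement's English description precedes it below -/
import Mathlib

section
/- The conditional density p(m''|m') satisfies the invariance condition ∫_{m₀}^∞ p(m')ρ(m')p(m''|m') dm' = n p(m'') for every m'' ≥ m₀, where n = βκ/(β−a). In other words, averaging the conditional triggered-magnitude density over triggering magnitudes weighted by Gutenberg-Richter times productivity recovers the Gutenberg-Richter law. -/
/-!
Writing `t = m' - m₀` and `c = β - a`, the product `p(m') ρ(m')` is `β κ e^{-c t}`, so the
integrand is `β κ p(m'') e^{-c t} (1 + C₁ (1 - 2 e^{-c t}) (1 - 2 e^{-β (m'' - m₀)}))`.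
The correction term integrates to zero because `∫₀^∞ e^{-c t} (1 - 2 e^{-c t}) dt = 1/c - 2/(2c)`,
and the leading term contributes `β κ p(m'') / c = n p(m'')`.
-/

open MeasureTheory Real Set

lemma exp_neg_mul_sub_eq (c m₀ x : ℝ) :
    exp (-c * (x - m₀)) = exp (c * m₀) * exp (-c * x) := by
  rw [← exp_add]
  ring_nf

lemma integrableOn_exp_neg_mul_sub_Ioi {c : ℝ} (hc : 0 < c) (m₀ : ℝ) :
    IntegrableOn (fun x => exp (-c * (x - m₀))) (Ioi m₀) := by
  simp_rw [exp_neg_mul_sub_eq c m₀]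
  exact (integrableOn_exp_mul_Ioi (neg_neg_of_pos hc) m₀).const_mul _

lemma integral_exp_neg_mul_sub_Ioi {c : ℝ} (hc : 0 < c) (m₀ : ℝ) :
    ∫ x in Ioi m₀, exp (-c * (x - m₀)) = c⁻¹ := by
  simp_rw [exp_neg_mul_sub_eq c m₀]
  rw [integral_const_mul, integral_exp_mul_Ioi (neg_neg_of_pos hc), neg_div_neg_eq,
    mul_div, ← exp_add]
  simp

lemma exp_neg_mul_sub_mul_one_sub_two_exp (c m₀ x : ℝ) :
    exp (-c * (x - m₀)) * (1 - 2 * exp (-c * (x - m₀)))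
      = exp (-c * (x - m₀)) - 2 * exp (-(2 * c) * (x - m₀)) := by
  rw [show -(2 * c) * (x - m₀) = -c * (x - m₀) + -c * (x - m₀) by ring, exp_add]
  ring

lemma integrableOn_exp_neg_mul_sub_mul_one_sub_two_exp_Ioi {c : ℝ} (hc : 0 < c) (m₀ : ℝ) :
    IntegrableOn (fun x => exp (-c * (x - m₀)) * (1 - 2 * exp (-c * (x - m₀)))) (Ioi m₀) := by
  simp_rw [exp_neg_mul_sub_mul_one_sub_two_exp c m₀]
  exact (integrableOn_exp_neg_mul_sub_Ioi hc m₀).sub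
    ((integrableOn_exp_neg_mul_sub_Ioi (by positivity) m₀).const_mul 2)

lemma integral_exp_neg_mul_sub_mul_one_sub_two_exp_Ioi {c : ℝ} (hc : 0 < c) (m₀ : ℝ) :
    ∫ x in Ioi m₀, exp (-c * (x - m₀)) * (1 - 2 * exp (-c * (x - m₀))) = 0 := by
  have h2c : 0 < 2 * c := by positivity
  simp_rw [exp_neg_mul_sub_mul_one_sub_two_exp c m₀]
  rw [integral_sub (integrableOn_exp_neg_mul_sub_Ioi hc m₀)
      ((integrableOn_exp_neg_mul_sub_Ioi h2c m₀).const_mul 2),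
    integral_const_mul, integral_exp_neg_mul_sub_Ioi hc, integral_exp_neg_mul_sub_Ioi h2c]
  field_simp
  ring

theorem invariance_condition_general (β a κ C₁ m₀ : ℝ) (hba : a < β) :
    ∀ m'' : ℝ, m₀ ≤ m'' →
      ∫ m' in Set.Ioi m₀,
        (β * Real.exp (-β * (m' - m₀))) * (κ * Real.exp (a * (m' - m₀))) *
          ((β * Real.exp (-β * (m'' - m₀))) *
            (1 + C₁ * (1 - 2 * Real.exp (-(β - a) * (m' - m₀)))
                   * (1 - 2 * Real.exp (-β * (m'' - m₀)))))
        = (β * κ / (β - a)) * (β * Real.exp (-β * (m'' - m₀))) := by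
  intro m'' _
  have hc : 0 < β - a := sub_pos.mpr hba
  set P := β * exp (-β * (m'' - m₀))
  set Y := 1 - 2 * exp (-β * (m'' - m₀))
  have hintegrand : ∀ x, (β * exp (-β * (x - m₀))) * (κ * exp (a * (x - m₀))) *
        (P * (1 + C₁ * (1 - 2 * exp (-(β - a) * (x - m₀))) * Y))
      = β * κ * P * exp (-(β - a) * (x - m₀))
        + β * κ * P * C₁ * Y *
          (exp (-(β - a) * (x - m₀)) * (1 - 2 * exp (-(β - a) * (x - m₀)))) := by
    intro x
    have hprod : exp (-β * (x - m₀)) * exp (a * (x - m₀)) = exp (-(β - a) * (x - m₀)) := by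
      rw [← exp_add]
      ring_nf
    linear_combination β * κ * P * (1 + C₁ * (1 - 2 * exp (-(β - a) * (x - m₀))) * Y) * hprod
  simp_rw [hintegrand]
  rw [integral_add ((integrableOn_exp_neg_mul_sub_Ioi hc m₀).const_mul _)
      ((integrableOn_exp_neg_mul_sub_mul_one_sub_two_exp_Ioi hc m₀).const_mul _),
    integral_const_mul, integral_const_mul, integral_exp_neg_mul_sub_Ioi hc,
    integral_exp_neg_mul_sub_mul_one_sub_two_exp_Ioi hc]
  ring

theorem invariance_condition (β a κ C₁ m₀ : ℝ) (ha : 0 < a) (hba : a < β)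
    (hκ : 0 < κ) (hC₁ : 0 ≤ C₁) (hC₁' : C₁ < 1) :
    ∀ m'' : ℝ, m₀ ≤ m'' →
      ∫ m' in Set.Ioi m₀,
        (β * Real.exp (-β * (m' - m₀))) * (κ * Real.exp (a * (m' - m₀))) *
          ((β * Real.exp (-β * (m'' - m₀))) *
            (1 + C₁ * (1 - 2 * Real.exp (-(β - a) * (m' - m₀)))
                   * (1 - 2 * Real.exp (-β * (m'' - m₀)))))
        = (β * κ / (β - a)) * (β * Real.exp (-β * (m'' - m₀))) :=
  invariance_condition_general β a κ C₁ m₀ hba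
end

section
/- Let Φ be a probability density on [0,∞), a(t) = ∫_t^∞ Φ, and suppose N̄ and N̄₋ are integrable functions satisfying N̄(t,τ) = n(Φ∗N̄(·,τ))(t) + n∫₀^τ Φ(t+τ−x)N̄₋(x) dx for all t ≥ 0, with 0 < n < 1. Then ∫₀^∞ N̄(t,τ) dt = n/(1−n) · ∫₀^τ a(τ−x)N̄₋(x) dx. -/
/-!
Extend `Φ` and `N` by zero to the whole line, and `Nm` by zero outside `[0, τ]`. On `(0, ∞)` the
equation then reads `N = n • (N ⋆ Φ) + n • (Nm ⋆ Φ)(· + τ)`. Integrating over `(0, ∞)` and applying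
Fubini, the first convolution has total mass `∫ N` because `Φ` has mass one, and the second one
contributes `∫₀^τ a(τ - x) Nm x dx`. Since `n ≠ 1`, the resulting linear equation
`∫ N = n ∫ N + n ∫₀^τ a(τ - x) Nm x dx` determines `∫ N`.
-/

open MeasureTheory Set ContinuousLinearMap
open scoped Convolution

lemma setIntegral_Ioi_comp_add_right (f : ℝ → ℝ) (a d : ℝ) :
    ∫ x in Ioi a, f (x + d) = ∫ y in Ioi (a + d), f y := by
  simpa using (measurePreserving_add_right volume d).setIntegral_preimage_emb
    (measurableEmbedding_addRight d) f (Ioi (a + d))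

lemma setIntegral_Ioi_indicator_Ioi (f : ℝ → ℝ) (a b : ℝ) :
    ∫ y in Ioi a, (Ioi b).indicator f y = ∫ y in Ioi (max a b), f y := by
  rw [integral_indicator measurableSet_Ioi, Measure.restrict_restrict measurableSet_Ioi,
    Ioi_inter_Ioi, sup_comm]

lemma setIntegral_Ioi_convolution_mul {f g : ℝ → ℝ} (hf : Integrable f) (hg : Integrable g)
    (a : ℝ) :
    ∫ s in Ioi a, (f ⋆[mul ℝ ℝ] g) s = ∫ x, f x * ∫ y in Ioi (a - x), g y := by
  have hint : Integrable (fun p : ℝ × ℝ => f p.2 * g (p.1 - p.2))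
      ((volume.restrict (Ioi a)).prod volume) :=
    (hf.convolution_integrand (mul ℝ ℝ) hg).mono_measure
      (Measure.prod_mono Measure.restrict_le_self le_rfl)
  simp_rw [convolution_mul]
  rw [integral_integral_swap hint]
  congr 1 with x
  simp only [integral_const_mul, sub_eq_add_neg _ x, setIntegral_Ioi_comp_add_right]

lemma convolution_indicator_Ioi_eq_intervalIntegral (f g : ℝ → ℝ) {t : ℝ} (ht : 0 ≤ t) :
    ((Ioi 0).indicator f ⋆[mul ℝ ℝ] (Ioi 0).indicator g) t = ∫ x in 0..t, g (t - x) * f x := by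
  have hpt : ∀ x, (Ioi 0).indicator f x * (Ioi 0).indicator g (t - x)
      = (Ioo 0 t).indicator (fun x => g (t - x) * f x) x := by
    intro x
    simp only [indicator_apply, mem_Ioi, mem_Ioo, sub_pos]
    split_ifs <;> grind
  rw [convolution_mul, funext hpt, integral_indicator measurableSet_Ioo,
    intervalIntegral.integral_of_le ht, integral_Ioc_eq_integral_Ioo]

lemma convolution_indicator_Icc_Ioi_eq_intervalIntegral (f g : ℝ → ℝ) {a b s : ℝ}
    (hab : a ≤ b) (hbs : b < s) :
    ((Icc a b).indicator f ⋆[mul ℝ ℝ] (Ioi 0).indicator g) s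
      = ∫ x in a..b, g (s - x) * f x := by
  have hpt : ∀ x, (Icc a b).indicator f x * (Ioi 0).indicator g (s - x)
      = (Icc a b).indicator (fun x => g (s - x) * f x) x := by
    intro x
    simp only [indicator_apply, mem_Ioi, mem_Icc, sub_pos]
    split_ifs <;> grind
  rw [convolution_mul, funext hpt, integral_indicator measurableSet_Icc,
    intervalIntegral.integral_of_le hab, integral_Icc_eq_integral_Ioc]

lemma setIntegral_Ioi_convolution_indicator_Ioi {f g : ℝ → ℝ} (hf : IntegrableOn f (Ioi 0))
    (hg : IntegrableOn g (Ioi 0)) :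
    ∫ t in Ioi 0, ((Ioi 0).indicator f ⋆[mul ℝ ℝ] (Ioi 0).indicator g) t
      = (∫ t in Ioi 0, f t) * ∫ t in Ioi 0, g t := by
  rw [setIntegral_Ioi_convolution_mul (hf.integrable_indicator measurableSet_Ioi)
    (hg.integrable_indicator measurableSet_Ioi), ← integral_indicator measurableSet_Ioi,
    ← integral_mul_const]
  congr 1 with x
  by_cases hx : 0 < x
  · rw [setIntegral_Ioi_indicator_Ioi, max_eq_right (by linarith)]
  · rw [indicator_of_notMem (by simpa using hx), zero_mul, zero_mul]

lemma setIntegral_Ioi_convolution_indicator_Icc_comp_add_right {f g : ℝ → ℝ} {a b : ℝ}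
    (hab : a ≤ b) (hf : IntegrableOn f (Icc a b)) (hg : IntegrableOn g (Ioi 0)) :
    ∫ t in Ioi 0, ((Icc a b).indicator f ⋆[mul ℝ ℝ] (Ioi 0).indicator g) (t + b)
      = ∫ x in a..b, (∫ y in Ioi (b - x), g y) * f x := by
  rw [setIntegral_Ioi_comp_add_right, zero_add,
    setIntegral_Ioi_convolution_mul (hf.integrable_indicator measurableSet_Icc)
      (hg.integrable_indicator measurableSet_Ioi),
    intervalIntegral.integral_of_le hab, ← integral_Icc_eq_integral_Ioc,
    ← integral_indicator measurableSet_Icc]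
  congr 1 with x
  by_cases hx : x ∈ Icc a b
  · rw [indicator_of_mem hx, indicator_of_mem hx, setIntegral_Ioi_indicator_Ioi,
      max_eq_left (by linarith [hx.2]), mul_comm]
  · rw [indicator_of_notMem hx, indicator_of_notMem hx, zero_mul]

theorem renewal_integral_general_general (Φ : ℝ → ℝ) (N Nm : ℝ → ℝ) (n τ : ℝ)
    (hΦint : MeasureTheory.IntegrableOn Φ (Set.Ioi 0))
    (hΦ1 : ∫ t in Set.Ioi (0:ℝ), Φ t = 1)
    (hn1 : n < 1) (hτ : 0 ≤ τ)
    (hNint : MeasureTheory.IntegrableOn N (Set.Ioi 0))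
    (hNmint : MeasureTheory.IntegrableOn Nm (Set.Icc 0 τ))
    (heq : ∀ t : ℝ, 0 ≤ t →
      N t = n * (∫ x in (0:ℝ)..t, Φ (t - x) * N x)
        + n * ∫ x in (0:ℝ)..τ, Φ (t + τ - x) * Nm x) :
    ∫ t in Set.Ioi (0:ℝ), N t
      = n / (1 - n) *
        ∫ x in (0:ℝ)..τ, (∫ y in Set.Ioi (τ - x), Φ y) * Nm x := by
  set F := (Ioi (0 : ℝ)).indicator Φ
  set G := (Ioi (0 : ℝ)).indicator N
  set H := (Icc (0 : ℝ) τ).indicator Nm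
  have hF : Integrable F := hΦint.integrable_indicator measurableSet_Ioi
  have hG : Integrable G := hNint.integrable_indicator measurableSet_Ioi
  have hH : Integrable H := hNmint.integrable_indicator measurableSet_Icc
  have hN : ∀ t ∈ Ioi (0 : ℝ),
      N t = n * (G ⋆[mul ℝ ℝ] F) t + n * (H ⋆[mul ℝ ℝ] F) (t + τ) := fun t ht => by
    rw [heq t (le_of_lt ht), convolution_indicator_Ioi_eq_intervalIntegral _ _ (le_of_lt ht),
      convolution_indicator_Icc_Ioi_eq_intervalIntegral _ _ hτ (by linarith [mem_Ioi.mp ht])]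
  have hI : ∫ t in Ioi 0, N t
      = n * (∫ t in Ioi 0, (G ⋆[mul ℝ ℝ] F) t) + n * ∫ t in Ioi 0, (H ⋆[mul ℝ ℝ] F) (t + τ) := by
    have hGF := (hG.integrable_convolution (mul ℝ ℝ) hF).restrict (s := Ioi 0)
    have hHF := ((hH.integrable_convolution (mul ℝ ℝ) hF).comp_add_right τ).restrict (s := Ioi 0)
    rw [setIntegral_congr_fun measurableSet_Ioi hN, integral_add (hGF.const_mul n)
      (hHF.const_mul n), integral_const_mul, integral_const_mul]
  simp only [F, G, H] at hI
  rw [setIntegral_Ioi_convolution_indicator_Ioi hNint hΦint, hΦ1, mul_one,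
    setIntegral_Ioi_convolution_indicator_Icc_comp_add_right hτ hNmint hΦint] at hI
  field_simp [show 1 - n ≠ 0 by linarith]
  linarith

theorem renewal_integral_general (Φ : ℝ → ℝ) (N Nm : ℝ → ℝ) (n τ : ℝ)
    (hΦpos : ∀ t, 0 ≤ t → 0 ≤ Φ t)
    (hΦint : MeasureTheory.IntegrableOn Φ (Set.Ioi 0))
    (hΦ1 : ∫ t in Set.Ioi (0:ℝ), Φ t = 1)
    (hn0 : 0 < n) (hn1 : n < 1) (hτ : 0 ≤ τ)
    (hNint : MeasureTheory.IntegrableOn N (Set.Ioi 0))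
    (hNmint : MeasureTheory.IntegrableOn Nm (Set.Icc 0 τ))
    (heq : ∀ t : ℝ, 0 ≤ t →
      N t = n * (∫ x in (0:ℝ)..t, Φ (t - x) * N x)
        + n * ∫ x in (0:ℝ)..τ, Φ (t + τ - x) * Nm x) :
    ∫ t in Set.Ioi (0:ℝ), N t
      = n / (1 - n) *
        ∫ x in (0:ℝ)..τ, (∫ y in Set.Ioi (τ - x), Φ y) * Nm x :=
  renewal_integral_general_general Φ N Nm n τ hΦint hΦ1 hn1 hτ hNint hNmint heq
end
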